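/- arXiv:1802.09269 — 2 statements merged into one kernel-verified Lean document; each statement's English description precedes it below -/
import Mathlib

section
/- (Iniquity Theorem, cost model CF2.) Let F be a Nash equilibrium flow of a symmetric nonatomic congestion game with type-specific costs, and let each agent's total cost be cost^F(x) = q(x)·S^F(x), where S^F(x) = Σ_{e∈F(x)} f_e(q(x), c^F(e), τ_e). Then for every α > 0 such that the ex post incomes q(x) − α·cost^F(x) remain positive, the ex post income distribution (q(x) − α·cost^F(x))_{x∈[0,1]} is again nondecreasing in x, and its Gini coefficient is at least the Gini coefficient of the ex ante distribution q. -/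
/-!
Since incomes are nondecreasing and edge costs nonincreasing in income, a richer type could
copy a poorer type's path at no greater cost, so at a Nash equilibrium the path cost `S` is
nonincreasing in the type. The ex post income is then `q · (1 - α S)`, the ex ante income
scaled by a positive nondecreasing factor. Such a rescaling shifts relative income towards the
top: every prefix `[0, t]` carries at most its old share of the total, because the factor is at
most its value at `t` on `[0, t]` and at least that value on `[t, 1]`. So the Lorenz curve
drops and the Gini coefficient rises.
-/

open MeasureTheory Set

/-- The Gini coefficient of an income distribution `q` on `[0,1]`. -/
noncomputable def gini (q : ℝ → ℝ) : ℝ :=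
  1 - 2 * ∫ t in (0:ℝ)..1, (∫ x in (0:ℝ)..t, q x) / (∫ x in (0:ℝ)..1, q x)

/-- The congestion of edge `e` under flow `F`. -/
noncomputable def congestion {E : Type} (F : ℝ → Finset E) (e : E) : ℝ :=
  (volume {x | x ∈ Icc (0:ℝ) 1 ∧ e ∈ F x}).toReal

/-- The path cost `S^F(x) = Σ_{e ∈ F(x)} f_e(q(x), c^F(e), τ_e)`. -/
noncomputable def pathCost {E : Type} (f : E → ℝ → ℝ → ℝ → ℝ) (q : ℝ → ℝ)
    (toll : E → ℝ) (F : ℝ → Finset E) (x : ℝ) : ℝ :=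
  ∑ e ∈ F x, f e (q x) (congestion F e) (toll e)

/-- A flow is finitary if it partitions `[0,1]` into finitely many intervals,
each mapped to a single path. -/
def Finitary {E : Type} (F : ℝ → Finset E) : Prop :=
  ∃ (k : ℕ) (a : ℕ → ℝ), 0 < k ∧ a 0 = 0 ∧ a k = 1 ∧
    (∀ i < k, a i < a (i + 1)) ∧
    ∀ i < k, ∀ b ∈ Ioc (a i) (a (i + 1)), F b = F (a (i + 1))

/-- `F` is a Nash equilibrium. -/
def IsNashEq {E : Type} (f : E → ℝ → ℝ → ℝ → ℝ) (q : ℝ → ℝ) (toll : E → ℝ)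
    (paths : Finset (Finset E)) (F : ℝ → Finset E) : Prop :=
  ∀ x ∈ Icc (0:ℝ) 1, ∀ P ∈ paths,
    pathCost f q toll F x ≤ ∑ e ∈ P, f e (q x) (congestion F e) (toll e)

theorem IsNashEq.antitoneOn_pathCost {E : Type} {f : E → ℝ → ℝ → ℝ → ℝ} {q : ℝ → ℝ}
    {toll : E → ℝ} {paths : Finset (Finset E)} {F : ℝ → Finset E}
    (hNE : IsNashEq f q toll paths F) (hF : ∀ x ∈ Icc (0:ℝ) 1, F x ∈ paths)
    (hq_mono : MonotoneOn q (Icc 0 1))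
    (hf_anti_income : ∀ e z t, ∀ w w', w ≤ w' → f e w' z t ≤ f e w z t) :
    AntitoneOn (pathCost f q toll F) (Icc 0 1) := fun x hx y hy hxy =>
  calc pathCost f q toll F y ≤ ∑ e ∈ F x, f e (q y) (congestion F e) (toll e) :=
        hNE y hy (F x) (hF x hx)
    _ ≤ pathCost f q toll F x :=
        Finset.sum_le_sum fun e _ => hf_anti_income e _ _ _ _ (hq_mono hx hy hxy)

/-- The Lorenz curve `Q(t)/μ` of an income distribution on `[0,1]`. -/
noncomputable def lorenz (q : ℝ → ℝ) (t : ℝ) : ℝ :=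
  (∫ x in (0:ℝ)..t, q x) / ∫ x in (0:ℝ)..1, q x

theorem IntervalIntegrable.lorenz {q : ℝ → ℝ} (hq : IntervalIntegrable q volume 0 1) :
    IntervalIntegrable (lorenz q) volume 0 1 :=
  ((intervalIntegral.continuousOn_primitive_interval' hq left_mem_uIcc).div_const
    _).intervalIntegrable

theorem gini_le_gini_of_lorenz_le {p q : ℝ → ℝ} (hp : IntervalIntegrable p volume 0 1)
    (hq : IntervalIntegrable q volume 0 1) (h : ∀ t ∈ Icc (0:ℝ) 1, lorenz p t ≤ lorenz q t) :
    gini q ≤ gini p := by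
  have := intervalIntegral.integral_mono_on zero_le_one hp.lorenz hq.lorenz h
  simp only [gini, lorenz] at this ⊢
  linarith

section Lorenz

variable {q h : ℝ → ℝ} {t : ℝ}

theorem integral_mul_le_mul_integral_of_monotoneOn (ht : t ∈ Icc (0:ℝ) 1)
    (hq_nonneg : ∀ x ∈ Icc (0:ℝ) 1, 0 ≤ q x) (hh : MonotoneOn h (Icc 0 1))
    (hq : IntervalIntegrable q volume 0 1)
    (hqh : IntervalIntegrable (fun x => q x * h x) volume 0 1) :
    (∫ x in (0:ℝ)..t, q x * h x) * (∫ x in (0:ℝ)..1, q x) ≤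
      (∫ x in (0:ℝ)..t, q x) * ∫ x in (0:ℝ)..1, q x * h x := by
  have ht' : t ∈ uIcc (0:ℝ) 1 := by rwa [uIcc_of_le zero_le_one]
  have hleft : uIcc 0 t ⊆ uIcc (0:ℝ) 1 := uIcc_subset_uIcc left_mem_uIcc ht'
  have hright : uIcc t 1 ⊆ uIcc (0:ℝ) 1 := uIcc_subset_uIcc ht' right_mem_uIcc
  have hQ_nonneg : 0 ≤ ∫ x in (0:ℝ)..t, q x :=
    intervalIntegral.integral_nonneg ht.1 fun x hx => hq_nonneg x ⟨hx.1, hx.2.trans ht.2⟩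
  have hR_nonneg : 0 ≤ ∫ x in t..1, q x :=
    intervalIntegral.integral_nonneg ht.2 fun x hx => hq_nonneg x ⟨ht.1.trans hx.1, hx.2⟩
  have hbelow : (∫ x in (0:ℝ)..t, q x * h x) ≤ h t * ∫ x in (0:ℝ)..t, q x := by
    rw [← intervalIntegral.integral_const_mul]
    refine intervalIntegral.integral_mono_on ht.1 (hqh.mono_set hleft)
      ((hq.mono_set hleft).const_mul _) fun x hx => ?_
    have hx' : x ∈ Icc (0:ℝ) 1 := ⟨hx.1, hx.2.trans ht.2⟩
    rw [mul_comm (h t)]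
    exact mul_le_mul_of_nonneg_left (hh hx' ht hx.2) (hq_nonneg x hx')
  have habove : h t * ∫ x in t..1, q x ≤ ∫ x in t..1, q x * h x := by
    rw [← intervalIntegral.integral_const_mul]
    refine intervalIntegral.integral_mono_on ht.2 ((hq.mono_set hright).const_mul _)
      (hqh.mono_set hright) fun x hx => ?_
    have hx' : x ∈ Icc (0:ℝ) 1 := ⟨ht.1.trans hx.1, hx.2⟩
    rw [mul_comm (h t)]
    exact mul_le_mul_of_nonneg_left (hh ht hx' hx.1) (hq_nonneg x hx')
  rw [← intervalIntegral.integral_add_adjacent_intervals (hq.mono_set hleft)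
      (hq.mono_set hright),
    ← intervalIntegral.integral_add_adjacent_intervals (hqh.mono_set hleft)
      (hqh.mono_set hright)]
  nlinarith [mul_le_mul_of_nonneg_right hbelow hR_nonneg,
    mul_le_mul_of_nonneg_left habove hQ_nonneg]

theorem gini_le_gini_mul_of_monotoneOn (hq_pos : ∀ x ∈ Icc (0:ℝ) 1, 0 < q x)
    (hh_pos : ∀ x ∈ Icc (0:ℝ) 1, 0 < h x) (hh : MonotoneOn h (Icc 0 1))
    (hq : IntervalIntegrable q volume 0 1)
    (hqh : IntervalIntegrable (fun x => q x * h x) volume 0 1) :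
    gini q ≤ gini fun x => q x * h x := by
  have hμ : 0 < ∫ x in (0:ℝ)..1, q x :=
    intervalIntegral.intervalIntegral_pos_of_pos_on hq
      (fun x hx => hq_pos x (Ioo_subset_Icc_self hx)) one_pos
  have hν : 0 < ∫ x in (0:ℝ)..1, q x * h x :=
    intervalIntegral.intervalIntegral_pos_of_pos_on hqh
      (fun x hx => mul_pos (hq_pos x (Ioo_subset_Icc_self hx))
        (hh_pos x (Ioo_subset_Icc_self hx))) one_pos
  refine gini_le_gini_of_lorenz_le hqh hq fun t ht => ?_
  rw [lorenz, lorenz, div_le_div_iff₀ hν hμ]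
  exact integral_mul_le_mul_integral_of_monotoneOn ht (fun x hx => (hq_pos x hx).le) hh hq hqh

end Lorenz

theorem iniquity_theorem_CF2_general
    {E : Type}
    (toll : E → ℝ)
    (paths : Finset (Finset E))
    (q : ℝ → ℝ)
    (hq_mono : MonotoneOn q (Icc 0 1)) (hq0 : 0 < q 0)
    (f : E → ℝ → ℝ → ℝ → ℝ)
    (hf_anti_income : ∀ e z t, ∀ w w', w ≤ w' → f e w' z t ≤ f e w z t)
    (F : ℝ → Finset E) (hF : ∀ x ∈ Icc (0:ℝ) 1, F x ∈ paths)
    (hNE : IsNashEq f q toll paths F)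
    (cst : ℝ → ℝ) (hcst : ∀ x, cst x = q x * pathCost f q toll F x) :
    ∀ α : ℝ, 0 < α → (∀ x ∈ Icc (0:ℝ) 1, 0 < q x - α * cst x) →
      MonotoneOn (fun x => q x - α * cst x) (Icc (0:ℝ) 1) ∧
      gini q ≤ gini (fun x => q x - α * cst x) := by
  intro α hα hpos
  set h := fun x => 1 - α * pathCost f q toll F x
  have hg : ∀ x, q x - α * cst x = q x * h x := fun x => by simp only [h, hcst]; ring
  simp only [hg] at hpos ⊢
  have hq_pos : ∀ x ∈ Icc (0:ℝ) 1, 0 < q x := fun x hx =>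
    hq0.trans_le (hq_mono (left_mem_Icc.mpr zero_le_one) hx hx.1)
  have hh_pos : ∀ x ∈ Icc (0:ℝ) 1, 0 < h x := fun x hx =>
    pos_of_mul_pos_right (hpos x hx) (hq_pos x hx).le
  have hh_mono : MonotoneOn h (Icc 0 1) := fun x hx y hy hxy =>
    sub_le_sub_left (mul_le_mul_of_nonneg_left
      (hNE.antitoneOn_pathCost hF hq_mono hf_anti_income hx hy hxy) hα.le) 1
  have hg_mono : MonotoneOn (fun x => q x * h x) (Icc 0 1) :=
    hq_mono.mul hh_mono (fun x hx => (hq_pos x hx).le) fun x hx => (hh_pos x hx).le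
  have hI : uIcc (0:ℝ) 1 = Icc 0 1 := uIcc_of_le zero_le_one
  exact ⟨hg_mono, gini_le_gini_mul_of_monotoneOn hq_pos hh_pos hh_mono
    (hI ▸ hq_mono).intervalIntegrable (hI ▸ hg_mono).intervalIntegrable⟩

/-- **The Iniquity Theorem (cost model CF2).** At any Nash equilibrium of a symmetric
nonatomic congestion game with type-specific costs, with agent cost
`cost^F(x) = q(x)·S^F(x)`, for every `α > 0` keeping ex post incomes positive,
the ex post income distribution `q(x) − α·cost^F(x)` is nondecreasing in `x` and its
Gini coefficient is at least the Gini coefficient of the ex ante distribution `q`. -/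
theorem iniquity_theorem_CF2
    {E : Type} [Fintype E] [DecidableEq E]
    (toll : E → ℝ) (htoll : ∀ e, 0 ≤ toll e)
    (paths : Finset (Finset E)) (hpaths : paths.Nonempty)
    (q : ℝ → ℝ) (hq_meas : Measurable q)
    (hq_mono : MonotoneOn q (Icc 0 1)) (hq0 : 0 < q 0)
    (f : E → ℝ → ℝ → ℝ → ℝ)
    (hf_nonneg : ∀ e w z t, 0 ≤ f e w z t)
    (hf_anti_income : ∀ e z t, ∀ w w', w ≤ w' → f e w' z t ≤ f e w z t)
    (hf_mono_cong : ∀ e w t, ∀ z z', z ≤ z' → f e w z t ≤ f e w z' t)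
    (hf_mono_toll : ∀ e w z, ∀ t t', t ≤ t' → f e w z t ≤ f e w z t')
    (F : ℝ → Finset E) (hF : ∀ x ∈ Icc (0:ℝ) 1, F x ∈ paths)
    (hFfin : Finitary F)
    (hNE : IsNashEq f q toll paths F)
    (cst : ℝ → ℝ) (hcst : ∀ x, cst x = q x * pathCost f q toll F x) :
    ∀ α : ℝ, 0 < α → (∀ x ∈ Icc (0:ℝ) 1, 0 < q x - α * cst x) →
      MonotoneOn (fun x => q x - α * cst x) (Icc (0:ℝ) 1) ∧
      gini q ≤ gini (fun x => q x - α * cst x) :=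
  iniquity_theorem_CF2_general toll paths q hq_mono hq0 f hf_anti_income F hF hNE cst hcst
end

section
/- For the Pigou network with income distribution q(x) = (β+1)x^β, switching point s = 1/2 and toll τ = (β+1)2^{−(β+1)}, the Gini coefficient of the ex post distribution q_α(x) = q(x) − α·cost(x) satisfies, for all sufficiently small α > 0, the closed-form identity G(q_α) = β(α(β + 2^{β+2} + 3) − 2^{β+3}) / (2(β+2)(α(β + 2^{β+1} + 2) − 2^{β+2})); in particular G(q_α) = β/(β+2) + [β(β+1)/((β+2)2^{β+3})]·α + O(α²) as α → 0. -/
/-!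
Below the switching point the ex post income is `(1 - α) q`, above it `(1 - α/2) q - α τ`, so
both the mean income and the integrated cumulative income `∫₀¹ Q` are affine in `α`, and they
are computed in closed form from `∫ (β+1) x^β = x^(β+1)`. Hence `G(q_α) = 1 - 2 ∫₀¹ Q / μ` is a
Möbius function of `α` that is regular at `0`, and its first-order Taylor expansion carries an
`O(α²)` remainder.
-/

open Set Filter Asymptotics

open MeasureTheory intervalIntegral Topology

section Piecewise

variable {f g : ℝ → ℝ} {a b s : ℝ}

theorem eqOn_ite_le_left (has : a ≤ s) :
    EqOn f (fun x => if x ≤ s then f x else g x) (uIcc a s) := by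
  intro x hx
  rw [uIcc_of_le has] at hx
  simp [hx.2]

theorem eqOn_ite_le_right (hsb : s ≤ b) :
    EqOn g (fun x => if x ≤ s then f x else g x) (uIoc s b) := by
  intro x hx
  rw [uIoc_of_le hsb] at hx
  simp [not_le.2 hx.1]

theorem integral_ite_le (has : a ≤ s) (hsb : s ≤ b)
    (hf : IntervalIntegrable f volume a s) (hg : IntervalIntegrable g volume s b) :
    ∫ x in a..b, (if x ≤ s then f x else g x) = (∫ x in a..s, f x) + ∫ x in s..b, g x := by
  have h_left := eqOn_ite_le_left (f := f) (g := g) has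
  have h_right := eqOn_ite_le_right (f := f) (g := g) hsb
  rw [← integral_add_adjacent_intervals (hf.congr (h_left.mono Ioc_subset_Icc_self))
    (hg.congr h_right), integral_congr h_left.symm,
    integral_congr_ae (ae_of_all _ fun x hx => (h_right hx).symm)]

theorem integral_primitive_ite_le (has : a ≤ s) (hsb : s ≤ b)
    (hf : IntervalIntegrable f volume a s) (hg : IntervalIntegrable g volume s b) :
    ∫ t in a..b, ∫ x in a..t, (if x ≤ s then f x else g x) =
      (∫ t in a..s, ∫ x in a..t, f x) + (b - s) * (∫ x in a..s, f x) +
        ∫ t in s..b, ∫ x in s..t, g x := by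
  set h := fun x => if x ≤ s then f x else g x
  have hh : IntervalIntegrable h volume a b :=
    (hf.congr ((eqOn_ite_le_left has).mono Ioc_subset_Icc_self)).trans
      (hg.congr (eqOn_ite_le_right hsb))
  have hprim : ContinuousOn (fun t => ∫ x in a..t, h x) (uIcc a b) :=
    continuousOn_primitive_interval' hh left_mem_uIcc
  have hgprim : ContinuousOn (fun t => ∫ x in s..t, g x) (uIcc s b) :=
    continuousOn_primitive_interval' hg left_mem_uIcc
  have h_left : EqOn (fun t => ∫ x in a..t, h x) (fun t => ∫ x in a..t, f x) (uIcc a s) := by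
    intro t ht
    rw [uIcc_of_le has] at ht
    refine integral_congr fun x hx => ?_
    rw [uIcc_of_le ht.1] at hx
    simp [h, hx.2.trans ht.2]
  have h_right : EqOn (fun t => ∫ x in a..t, h x)
      (fun t => (∫ x in a..s, f x) + ∫ x in s..t, g x) (uIcc s b) := fun t ht =>
    integral_ite_le has (uIcc_of_le hsb ▸ ht).1 hf
      (hg.mono_set (uIcc_subset_uIcc left_mem_uIcc ht))
  have hs : s ∈ uIcc a b := mem_uIcc_of_le has hsb
  rw [← integral_add_adjacent_intervals
      ((hprim.mono (uIcc_subset_uIcc left_mem_uIcc hs)).intervalIntegrable)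
      ((hprim.mono (uIcc_subset_uIcc hs right_mem_uIcc)).intervalIntegrable),
    integral_congr h_left, integral_congr h_right,
    integral_add intervalIntegrable_const hgprim.intervalIntegrable, intervalIntegral.integral_const,
    smul_eq_mul]
  ring

end Piecewise

section Power

variable {β : ℝ}

theorem integral_affine_rpow (hβ : -1 < β) (A k a t : ℝ) :
    ∫ x in a..t, (A * ((β + 1) * x ^ β) + k) = A * (t ^ (β + 1) - a ^ (β + 1)) + k * (t - a) := by
  have hβ₁ : β + 1 ≠ 0 := by linarith
  rw [integral_add (((intervalIntegrable_rpow' hβ).const_mul _).const_mul _) intervalIntegrable_const,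
    intervalIntegral.integral_const_mul, intervalIntegral.integral_const_mul,
    integral_rpow (Or.inl hβ), intervalIntegral.integral_const, smul_eq_mul]
  field_simp

theorem integral_primitive_affine_rpow (hβ : -1 < β) (A k a b : ℝ) :
    ∫ t in a..b, ∫ x in a..t, (A * ((β + 1) * x ^ β) + k) =
      A * ((b ^ (β + 2) - a ^ (β + 2)) / (β + 2) - (b - a) * a ^ (β + 1)) +
        k * (b - a) ^ 2 / 2 := by
  have hβ₁ : -1 < β + 1 := by linarith
  have hβ₂ : β + 2 ≠ 0 := by linarith
  simp_rw [integral_affine_rpow hβ]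
  rw [integral_add (((intervalIntegrable_rpow' hβ₁).sub intervalIntegrable_const).const_mul _)
      ((intervalIntegral.intervalIntegrable_id.sub intervalIntegrable_const).const_mul _),
    intervalIntegral.integral_const_mul, intervalIntegral.integral_const_mul,
    integral_sub (intervalIntegrable_rpow' hβ₁) intervalIntegrable_const,
    integral_sub intervalIntegral.intervalIntegrable_id intervalIntegrable_const,
    integral_rpow (Or.inl hβ₁), integral_id, intervalIntegral.integral_const,
    intervalIntegral.integral_const, smul_eq_mul, smul_eq_mul, show β + 1 + 1 = β + 2 by ring]
  field_simp
  ring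

theorem gini_ite_rpow {s : ℝ} (hβ : -1 < β) (hs₀ : 0 ≤ s) (hs₁ : s ≤ 1) (A B k : ℝ) :
    gini (fun x => if x ≤ s then A * ((β + 1) * x ^ β) else B * ((β + 1) * x ^ β) + k) =
      1 - 2 * (A * s ^ (β + 2) / (β + 2) + (1 - s) * (A * s ^ (β + 1)) +
          B * ((1 - s ^ (β + 2)) / (β + 2) - (1 - s) * s ^ (β + 1)) + k * (1 - s) ^ 2 / 2) /
        (A * s ^ (β + 1) + B * (1 - s ^ (β + 1)) + k * (1 - s)) := by
  have hpow (a b : ℝ) : IntervalIntegrable (fun x => (β + 1) * x ^ β) volume a b :=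
    (intervalIntegrable_rpow' hβ).const_mul _
  have hf : IntervalIntegrable (fun x => A * ((β + 1) * x ^ β)) volume 0 s :=
    (hpow 0 s).const_mul A
  have hg : IntervalIntegrable (fun x => B * ((β + 1) * x ^ β) + k) volume s 1 :=
    ((hpow s 1).const_mul B).add intervalIntegrable_const
  have h₁ : (0:ℝ) ^ (β + 1) = 0 := Real.zero_rpow (by linarith)
  have h₂ : (0:ℝ) ^ (β + 2) = 0 := Real.zero_rpow (by linarith)
  have hf₁ (t : ℝ) : ∫ x in (0:ℝ)..t, A * ((β + 1) * x ^ β) = A * t ^ (β + 1) := by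
    simpa [h₁] using integral_affine_rpow hβ A 0 0 t
  have hf₂ : ∫ t in (0:ℝ)..s, ∫ x in (0:ℝ)..t, A * ((β + 1) * x ^ β) =
      A * s ^ (β + 2) / (β + 2) := by
    simpa [h₁, h₂, mul_div_assoc] using integral_primitive_affine_rpow hβ A 0 0 s
  rw [gini, intervalIntegral.integral_div, integral_primitive_ite_le hs₀ hs₁ hf hg,
    integral_ite_le hs₀ hs₁ hf hg, hf₁, hf₂, integral_affine_rpow hβ,
    integral_primitive_affine_rpow hβ, Real.one_rpow, Real.one_rpow]
  ring

end Power

theorem two_rpow_add_two (β : ℝ) : (2:ℝ) ^ (β + 2) = 2 * 2 ^ (β + 1) := by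
  rw [show β + 2 = β + 1 + 1 by ring, Real.rpow_add_one two_ne_zero, mul_comm]

theorem two_rpow_add_three (β : ℝ) : (2:ℝ) ^ (β + 3) = 4 * 2 ^ (β + 1) := by
  rw [show β + 3 = β + 2 + 1 by ring, Real.rpow_add_one two_ne_zero, two_rpow_add_two]
  ring

theorem gini_pigou_expost {β α : ℝ} (hβ : -1 < β)
    (hα : α * (β + (2:ℝ) ^ (β + 1) + 2) ≠ (2:ℝ) ^ (β + 2)) :
    gini (fun x => (β + 1) * x ^ β - α * (if x ≤ 1/2 then (β + 1) * x ^ β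
        else (1/2) * (β + 1) * x ^ β + (β + 1) * (2:ℝ) ^ (-(β + 1)))) =
      β * (α * (β + (2:ℝ) ^ (β + 2) + 3) - (2:ℝ) ^ (β + 3)) /
        (2 * (β + 2) * (α * (β + (2:ℝ) ^ (β + 1) + 2) - (2:ℝ) ^ (β + 2))) := by
  have hsplit : (fun x => (β + 1) * x ^ β - α * (if x ≤ 1/2 then (β + 1) * x ^ β
        else (1/2) * (β + 1) * x ^ β + (β + 1) * (2:ℝ) ^ (-(β + 1)))) =
      fun x => if x ≤ 1/2 then (1 - α) * ((β + 1) * x ^ β)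
        else (1 - α / 2) * ((β + 1) * x ^ β) + -(α * ((β + 1) * (2:ℝ) ^ (-(β + 1)))) := by
    funext x
    split_ifs <;> ring
  rw [two_rpow_add_two] at hα
  rw [hsplit, gini_ite_rpow hβ (by norm_num) (by norm_num), two_rpow_add_two, two_rpow_add_three,
    one_div, Real.inv_rpow zero_le_two, Real.inv_rpow zero_le_two, two_rpow_add_two,
    Real.rpow_neg zero_le_two]
  set P := (2:ℝ) ^ (β + 1)
  have hP : 0 < P := by positivity
  have hβ₂ : 0 < β + 2 := by linarith
  have hden : α * (β + P + 2) - 2 * P ≠ 0 := sub_ne_zero.2 hα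
  have hmass : (1 - α) * P⁻¹ + (1 - α / 2) * (1 - P⁻¹) + -(α * ((β + 1) * P⁻¹)) * (1 - 2⁻¹) =
      -(α * (β + P + 2) - 2 * P) / (2 * P) := by
    field_simp
    ring
  rw [hmass]
  field_simp
  ring

theorem isBigO_div_affine_sub_tangent {a b c d : ℝ} (hd : d ≠ 0) :
    (fun x => (a * x + b) / (c * x + d) - (b / d + (a * d - b * c) / d ^ 2 * x))
      =O[𝓝 0] fun x => x ^ 2 := by
  -- the remainder is exactly `x ^ 2 * c * (b * c - a * d) / (d ^ 2 * (c * x + d))`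
  have hcont : ContinuousAt (fun x => c * (b * c - a * d) / (d ^ 2 * (c * x + d))) 0 :=
    continuousAt_const.div (by fun_prop) (by simpa using hd)
  have hne : ∀ᶠ x in 𝓝 (0:ℝ), c * x + d ≠ 0 :=
    (show ContinuousAt (fun x : ℝ => c * x + d) 0 by fun_prop).eventually_ne (by simpa using hd)
  refine ((isBigO_refl (fun x : ℝ => x ^ 2) _).mul (hcont.tendsto.isBigO_one ℝ)).congr' ?_ ?_
  · filter_upwards [hne] with x hx
    rw [mul_comm] at hx
    field_simp
    ring
  · exact Eventually.of_forall fun x => mul_one _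

/-- For the Pigou network with income distribution `q(x) = (β+1)x^β`, switching point
`s = 1/2` and toll `τ = (β+1)2^{−(β+1)}`, the Gini coefficient of the ex post
distribution `q_α = q − α·cost` satisfies, for all sufficiently small `α > 0`,
`G(q_α) = β(α(β + 2^{β+2} + 3) − 2^{β+3}) / (2(β+2)(α(β + 2^{β+1} + 2) − 2^{β+2}))`;
in particular `G(q_α) = β/(β+2) + [β(β+1)/((β+2)2^{β+3})]·α + O(α²)` as `α → 0⁺`. -/
theorem pigou_gini_closed_form
    (β : ℝ) (hβ : 0 ≤ β)
    (q : ℝ → ℝ) (hq : ∀ x : ℝ, q x = (β + 1) * x ^ β)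
    (τ : ℝ) (hτ : τ = (β + 1) * (2:ℝ) ^ (-(β + 1)))
    (cost : ℝ → ℝ)
    (hcost : ∀ x : ℝ, cost x =
      if x ≤ 1/2 then (β + 1) * x ^ β else (1/2) * (β + 1) * x ^ β + τ) :
    (∃ α₀ : ℝ, 0 < α₀ ∧ ∀ α : ℝ, 0 < α → α < α₀ →
      gini (fun x => q x - α * cost x) =
        β * (α * (β + (2:ℝ) ^ (β + 2) + 3) - (2:ℝ) ^ (β + 3)) /
          (2 * (β + 2) * (α * (β + (2:ℝ) ^ (β + 1) + 2) - (2:ℝ) ^ (β + 2)))) ∧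
    (fun α : ℝ => gini (fun x => q x - α * cost x)
        - (β / (β + 2) + β * (β + 1) / ((β + 2) * (2:ℝ) ^ (β + 3)) * α))
      =O[nhdsWithin 0 (Ioi 0)] (fun α : ℝ => α ^ 2) := by
  obtain rfl : q = _ := funext hq
  obtain rfl : cost = _ := funext hcost
  subst hτ
  beta_reduce
  have hβ₂ : 0 < β + 2 := by linarith
  have hZ : 0 < β + (2:ℝ) ^ (β + 1) + 2 := by positivity
  set α₀ := (2:ℝ) ^ (β + 2) / (β + (2:ℝ) ^ (β + 1) + 2)
  have hclosed (α : ℝ) (hα : α < α₀) :=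
    gini_pigou_expost (by linarith) ((lt_div_iff₀ hZ).1 hα).ne
  refine ⟨⟨α₀, by positivity, fun α _ hα => hclosed α hα⟩, ?_⟩
  have hd : -(2 * (β + 2) * (2:ℝ) ^ (β + 2)) ≠ 0 := neg_ne_zero.2 (by positivity)
  refine ((isBigO_div_affine_sub_tangent (a := β * (β + (2:ℝ) ^ (β + 2) + 3))
    (b := -(β * (2:ℝ) ^ (β + 3))) (c := 2 * (β + 2) * (β + (2:ℝ) ^ (β + 1) + 2)) hd).mono
    nhdsWithin_le_nhds).congr' ?_ EventuallyEq.rfl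
  filter_upwards [Ioo_mem_nhdsGT (by positivity : 0 < α₀)] with α hα
  rw [hclosed α hα.2]
  congr 1
  · congr 1 <;> ring
  · rw [two_rpow_add_two, two_rpow_add_three]
    field_simp
    ring
end
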